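/- Let d ≥ 2 be an integer, δ ≥ 1, and let B = (b_1, …, b_{d+1}) ∈ ℝ^{m×(d+1)} be a δ-twin-reduced basis. Then δ^{−d/(d−1)} · ‖b_1‖ ≤ vol(L(B))^{1/(d+1)} ≤ δ^{d/(d−1)} · ‖b*_{d+1}‖. -/

import Mathlib

noncomputable section

/-- Euclidean space `ℝ^m`. -/
abbrev Euc (m : ℕ) : Type := EuclideanSpace ℝ (Fin m)

variable {m : ℕ}

/-- `projGS B s` is the orthogonal projection `π_{s+1}` onto the subspace orthogonal to
`b_1, …, b_s` (0-based: orthogonal to `B 0, …, B (s-1)`). -/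
def projGS (B : ℕ → Euc m) (s : ℕ) (x : Euc m) : Euc m :=
  (Submodule.orthogonalProjectionOnto ((Submodule.span ℝ (B '' Set.Iio s))ᗮ) x : Euc m)

/-- The Gram–Schmidt vector `b*_{i+1}` (0-based index `i`). -/
def gsoVec (B : ℕ → Euc m) (i : ℕ) : Euc m := projGS B i (B i)

/-- The projected block `B_{[s+1, s+ℓ]}` (0-based start `s`; the length is supplied
separately to the predicates below). -/
def block (B : ℕ → Euc m) (s : ℕ) : ℕ → Euc m := fun t => projGS B s (B (s + t))

/-- Gram matrix of the first `ℓ` vectors. -/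
def gram (B : ℕ → Euc m) (ℓ : ℕ) : Matrix (Fin ℓ) (Fin ℓ) ℝ :=
  Matrix.of fun i j => (inner ℝ (B i) (B j) : ℝ)

/-- `vol(L(B)) = det(BᵀB)^{1/2}` for the first `ℓ` vectors. -/
def volB (B : ℕ → Euc m) (ℓ : ℕ) : ℝ := Real.sqrt (gram B ℓ).det

/-- The lattice generated by the first `ℓ` vectors. -/
def latticeSpan (B : ℕ → Euc m) (ℓ : ℕ) : Submodule ℤ (Euc m) :=
  Submodule.span ℤ (B '' Set.Iio ℓ)

/-- `λ₁(L)`: the minimum norm of a nonzero lattice vector. -/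
def lambda1 (L : Submodule ℤ (Euc m)) : ℝ :=
  sInf {r : ℝ | ∃ x ∈ L, x ≠ 0 ∧ ‖x‖ = r}

/-- `B` (of rank `ℓ`) is `δ`-SVP-reduced. -/
def SVPReduced (δ : ℝ) (B : ℕ → Euc m) (ℓ : ℕ) : Prop :=
  ‖B 0‖ ≤ δ * lambda1 (latticeSpan B ℓ)

/-- `B` (of rank `ℓ`) is `δ`-HSVP-reduced. -/
def HSVPReduced (δ : ℝ) (B : ℕ → Euc m) (ℓ : ℕ) : Prop :=
  ‖B 0‖ ≤ δ * volB B ℓ ^ ((1 : ℝ) / ℓ)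

/-- The dual basis `B^× = B (BᵀB)⁻¹` of the first `ℓ` vectors (extended by `0`). -/
def dualFam (B : ℕ → Euc m) (ℓ : ℕ) : ℕ → Euc m := fun i =>
  if h : i < ℓ then ∑ j : Fin ℓ, ((gram B ℓ)⁻¹ j ⟨i, h⟩) • B j else 0

/-- The reversed dual basis `B^{-s}`. -/
def revDual (B : ℕ → Euc m) (ℓ : ℕ) : ℕ → Euc m := fun i => dualFam B ℓ (ℓ - 1 - i)

/-- `B` (of rank `ℓ`) is `δ`-DHSVP-reduced: its reversed dual basis is `δ`-HSVP-reduced. -/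
def DHSVPReduced (δ : ℝ) (B : ℕ → Euc m) (ℓ : ℕ) : Prop :=
  HSVPReduced δ (revDual B ℓ) ℓ

/-- `B = (b_1, …, b_{d+1})` is `δ`-twin-reduced: `B_{[1,d]}` is `δ`-HSVP-reduced and
`B_{[2,d+1]}` is `δ`-DHSVP-reduced. -/
def TwinReduced (δ : ℝ) (B : ℕ → Euc m) (d : ℕ) : Prop :=
  HSVPReduced δ (block B 0) d ∧ DHSVPReduced δ (block B 1) d

/-- Gram–Schmidt coefficient `μ_{i,j}` (0-based). -/
def mu (B : ℕ → Euc m) (i j : ℕ) : ℝ :=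
  (inner ℝ (B i) (gsoVec B j) : ℝ) / ‖gsoVec B j‖ ^ 2

/-- The first `ℓ` vectors are size-reduced. -/
def SizeReduced (B : ℕ → Euc m) (ℓ : ℕ) : Prop :=
  ∀ i j, j < i → i < ℓ → |mu B i j| ≤ 1 / 2

/-- The first `ℓ` vectors are `ε`-LLL-reduced. -/
def LLLReduced (ε : ℝ) (B : ℕ → Euc m) (ℓ : ℕ) : Prop :=
  SizeReduced B ℓ ∧
    ∀ i, 0 < i → i < ℓ →
      ‖gsoVec B (i - 1)‖ ^ 2 ≤ (1 + ε) * ‖mu B i (i - 1) • gsoVec B (i - 1) + gsoVec B i‖ ^ 2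

/-- `B` (of rank `ℓ`) is `δ`-DSVP-reduced: its reversed dual basis is `δ`-SVP-reduced
and `B` is `(1/3)`-LLL-reduced. -/
def DSVPReduced (δ : ℝ) (B : ℕ → Euc m) (ℓ : ℕ) : Prop :=
  SVPReduced δ (revDual B ℓ) ℓ ∧ LLLReduced (1 / 3) B ℓ

/-- `γ` is an admissible Hermite bound for rank `r`: every lattice generated by `r`
linearly independent vectors of a Euclidean space satisfies `λ₁² ≤ γ · vol^{2/r}`. -/
def IsHermiteBound (γ : ℝ) (r : ℕ) : Prop :=
  ∀ (m' : ℕ) (v : ℕ → Euc m'), LinearIndependent ℝ (fun i : Fin r => v i) →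
    lambda1 (latticeSpan v r) ^ 2 ≤ γ * volB v r ^ ((2 : ℝ) / r)


/-!
Write `x = ‖b₁‖`, `y = ‖b*_{d+1}‖` and `V = vol(L(B))`. Since volumes are products of
Gram–Schmidt norms, `V = vol(B_{[1,d]}) · y = x · vol(B_{[2,d+1]})`. The first vector of the
reversed dual basis of `B_{[2,d+1]}` is `b*_{d+1} / ‖b*_{d+1}‖²` and its volume is
`vol(B_{[2,d+1]})⁻¹`, so twin-reduction gives `x^d y ≤ δ^d V` and `V ≤ δ^d x y^d`.
Eliminating `y`, resp. `x`, gives `x^{d²-1} ≤ δ^{d²+d} V^{d-1}` and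
`V^{d-1} ≤ δ^{d²+d} y^{d²-1}`, which are the two bounds.
-/

open Submodule InnerProductSpace
open scoped Matrix

section InnerProductSpace

variable {E : Type*} [NormedAddCommGroup E] [InnerProductSpace ℝ E]

lemma mem_orthogonal_span_iff {s : Set E} {w : E} :
    w ∈ (span ℝ s)ᗮ ↔ ∀ u ∈ s, ⟪u, w⟫_ℝ = 0 :=
  ⟨fun hw _ hu => inner_right_of_mem_orthogonal (subset_span hu) hw, fun h =>
    (isOrtho_span.2 fun _ hu _ hv => (Set.mem_singleton_iff.1 hv) ▸ h _ hu).symm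
      (mem_span_singleton_self w)⟩

lemma eq_of_mem_span_of_forall_inner_eq {s : Set E} {u v : E} (hu : u ∈ span ℝ s)
    (hv : v ∈ span ℝ s) (h : ∀ x ∈ s, ⟪x, u⟫_ℝ = ⟪x, v⟫_ℝ) : u = v := by
  have hperp : u - v ∈ (span ℝ s)ᗮ :=
    mem_orthogonal_span_iff.2 fun x hx => by rw [inner_sub_right, h x hx, sub_self]
  have hzero : u - v ∈ span ℝ s ⊓ (span ℝ s)ᗮ := ⟨sub_mem hu hv, hperp⟩
  rwa [inf_orthogonal_eq_bot, mem_bot, sub_eq_zero] at hzero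

lemma mem_of_mem_sup_of_mem_orthogonal {U T : Submodule ℝ E} (hT : T ≤ Uᗮ) {x : E}
    (hx : x ∈ U ⊔ T) (hxU : x ∈ Uᗮ) : x ∈ T := by
  have hmem : x ∈ (T ⊔ U) ⊓ Uᗮ := ⟨sup_comm U T ▸ hx, hxU⟩
  rwa [sup_inf_assoc_of_le U hT, inf_orthogonal_eq_bot, sup_bot_eq] at hmem

end InnerProductSpace

section GramSchmidt

variable (B : ℕ → Euc m)

lemma projGS_eq_of_mem {s : ℕ} {x v : Euc m} (hv : v ∈ (span ℝ (B '' Set.Iio s))ᗮ)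
    (hxv : x - v ∈ span ℝ (B '' Set.Iio s)) : projGS B s x = v := by
  rw [projGS, ← starProjection_apply, eq_starProjection_of_mem_orthogonal hv]
  rwa [orthogonal_orthogonal]

lemma projGS_mem_orthogonal (s : ℕ) (x : Euc m) :
    projGS B s x ∈ (span ℝ (B '' Set.Iio s))ᗮ :=
  SetLike.coe_mem _

lemma sub_projGS_mem (s : ℕ) (x : Euc m) : x - projGS B s x ∈ span ℝ (B '' Set.Iio s) := by
  rw [projGS, ← starProjection_apply, starProjection_orthogonal_val]
  simp

lemma sub_gsoVec_mem (i : ℕ) : B i - gsoVec B i ∈ span ℝ (B '' Set.Iio i) :=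
  sub_projGS_mem B i (B i)

lemma gsoVec_eq_gramSchmidt (i : ℕ) : gsoVec B i = gramSchmidt ℝ B i := by
  refine projGS_eq_of_mem B (mem_orthogonal_span_iff.2 ?_) ?_
  · rintro _ ⟨j, hj, rfl⟩
    rw [real_inner_comm]
    exact gramSchmidt_inv_triangular ℝ B hj
  · rw [← span_gramSchmidt_Iio ℝ B i, sub_eq_iff_eq_add'.2 (gramSchmidt_def' ℝ B i)]
    refine sum_mem fun j hj => span_le.2 ?_ (starProjection_apply_mem _ (B i))
    rw [Set.singleton_subset_iff]
    exact subset_span (Set.mem_image_of_mem _ (Finset.mem_Iio.1 hj))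

lemma eq_gsoVec_add_sum (b : ℕ) :
    B b = gsoVec B b + ∑ i ∈ Finset.range b, mu B b i • gsoVec B i := by
  simp only [gsoVec_eq_gramSchmidt, mu, ← Nat.Iio_eq_range]
  convert gramSchmidt_def'' ℝ B b using 5 with i
  rw [real_inner_comm]
  norm_cast

/-- Unit upper triangular Gram–Schmidt coefficients: `B a = ∑ j, gsoCoeff B j a • gsoVec B j`. -/
def gsoCoeff (j a : ℕ) : ℝ :=
  if j = a then 1 else if j < a then mu B a j else 0

lemma inner_gsoVec (a j : ℕ) :
    ⟪B a, gsoVec B j⟫_ℝ = gsoCoeff B j a * ‖gsoVec B j‖ ^ 2 := by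
  rcases lt_trichotomy j a with h | rfl | h
  · rw [gsoCoeff, if_neg h.ne, if_pos h, mu]
    rcases eq_or_ne (gsoVec B j) 0 with hz | hz
    · simp [hz]
    · rw [div_mul_cancel₀ _ (by positivity)]
  · have h0 : ⟪B j - gsoVec B j, gsoVec B j⟫_ℝ = 0 :=
      inner_right_of_mem_orthogonal (sub_gsoVec_mem B j) (projGS_mem_orthogonal B j (B j))
    rw [inner_sub_left, sub_eq_zero] at h0
    rw [gsoCoeff, if_pos rfl, one_mul, h0, real_inner_self_eq_norm_sq]
  · rw [gsoCoeff, if_neg h.ne', if_neg (not_lt_of_gt h), zero_mul]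
    exact inner_right_of_mem_orthogonal (subset_span (Set.mem_image_of_mem _ h))
      (projGS_mem_orthogonal B j (B j))

end GramSchmidt

section Volume

variable (B : ℕ → Euc m)

lemma gram_eq_transpose_mul_diagonal_mul (ℓ : ℕ) :
    gram B ℓ = (Matrix.of fun j a : Fin ℓ => gsoCoeff B j a)ᵀ *
      (Matrix.diagonal (fun j : Fin ℓ => ‖gsoVec B j‖ ^ 2) *
        Matrix.of fun j a : Fin ℓ => gsoCoeff B j a) := by
  ext a b
  change ⟪B a, B b⟫_ℝ = _
  rw [Matrix.mul_apply]
  simp only [Matrix.diagonal_mul, Matrix.transpose_apply, Matrix.of_apply]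
  have hentry (j : Fin ℓ) : gsoCoeff B j a * (‖gsoVec B j‖ ^ 2 * gsoCoeff B j b) =
      ⟪B a, gsoVec B j⟫_ℝ * gsoCoeff B j b := by
    rw [inner_gsoVec]; ring
  simp_rw [hentry]
  have hvanish : ∀ j ∈ Finset.range ℓ, j ∉ Finset.range (b + 1) →
      ⟪B a, gsoVec B j⟫_ℝ * gsoCoeff B j b = 0 := fun j _ hj => by
    rw [Finset.mem_range, not_lt] at hj
    rw [gsoCoeff, if_neg (by omega), if_neg (by omega), mul_zero]
  rw [Fin.sum_univ_eq_sum_range (fun j => ⟪B a, gsoVec B j⟫_ℝ * gsoCoeff B j b),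
    ← Finset.sum_subset (Finset.range_subset_range.2 b.isLt) hvanish, Finset.sum_range_succ,
    gsoCoeff, if_pos rfl, mul_one]
  conv_lhs => rw [eq_gsoVec_add_sum B b, inner_add_right, inner_sum, add_comm]
  refine congrArg (· + _) (Finset.sum_congr rfl fun i hi => ?_)
  rw [Finset.mem_range] at hi
  rw [real_inner_smul_right, gsoCoeff, if_neg hi.ne, if_pos hi, mul_comm]

lemma det_gram (ℓ : ℕ) : (gram B ℓ).det = ∏ i : Fin ℓ, ‖gsoVec B i‖ ^ 2 := by
  have hunit : (Matrix.of fun j a : Fin ℓ => gsoCoeff B j a).det = 1 := by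
    rw [Matrix.det_of_isUpperTriangular]
    · exact Finset.prod_eq_one fun i _ => if_pos rfl
    · intro i j (hij : (j : ℕ) < i)
      exact (if_neg (by omega)).trans (if_neg (by omega))
  rw [gram_eq_transpose_mul_diagonal_mul, Matrix.det_mul, Matrix.det_mul, Matrix.det_transpose,
    hunit, Matrix.det_diagonal, one_mul, mul_one]

lemma volB_eq_prod (ℓ : ℕ) : volB B ℓ = ∏ i : Fin ℓ, ‖gsoVec B i‖ := by
  rw [volB, det_gram, Finset.prod_pow]
  exact Real.sqrt_sq (Finset.prod_nonneg fun i _ => norm_nonneg _)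

lemma volB_succ (ℓ : ℕ) : volB B (ℓ + 1) = volB B ℓ * ‖gsoVec B ℓ‖ := by
  simp [volB_eq_prod, Fin.prod_univ_castSucc]

lemma volB_pos_of_linearIndependent {ℓ : ℕ} (hB : LinearIndependent ℝ fun i : Fin ℓ => B i) :
    0 < volB B ℓ :=
  Real.sqrt_pos.2 (Matrix.posDef_gram_of_linearIndependent hB).det_pos

lemma gsoVec_ne_zero_of_det_gram_ne_zero {ℓ i : ℕ} (hdet : (gram B ℓ).det ≠ 0) (hi : i < ℓ) :
    gsoVec B i ≠ 0 := by
  rw [det_gram, Finset.prod_ne_zero_iff] at hdet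
  exact norm_ne_zero_iff.1 (pow_ne_zero_iff two_ne_zero |>.1 (hdet ⟨i, hi⟩ (Finset.mem_univ _)))

end Volume

section Block

variable (B : ℕ → Euc m)

lemma block_zero : block B 0 = B := by
  funext t
  refine (projGS_eq_of_mem B ?_ ?_).trans (congrArg B (zero_add t))
  all_goals simp

lemma block_mem_orthogonal (s t : ℕ) : block B s t ∈ (span ℝ (B '' Set.Iio s))ᗮ :=
  projGS_mem_orthogonal B s _

lemma sub_block_mem (s t : ℕ) : B (s + t) - block B s t ∈ span ℝ (B '' Set.Iio s) :=
  sub_projGS_mem B s _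

lemma gsoVec_block (s i : ℕ) : gsoVec (block B s) i = gsoVec B (s + i) := by
  set U := span ℝ (B '' Set.Iio s)
  set T := span ℝ (block B s '' Set.Iio i)
  set S := span ℝ (B '' Set.Iio (s + i))
  have hUS : U ≤ S := span_mono (Set.image_mono (Set.Iio_subset_Iio (Nat.le_add_right s i)))
  have hTU : T ≤ Uᗮ := span_le.2 <| Set.image_subset_iff.2 fun t _ => block_mem_orthogonal B s t
  have hTS : T ≤ S := span_le.2 <| Set.image_subset_iff.2 fun t (ht : t < i) => by
    have hB : B (s + t) ∈ S := subset_span (Set.mem_image_of_mem _ (by simpa using ht))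
    simpa using sub_mem hB (hUS (sub_block_mem B s t))
  have hSUT : S ≤ U ⊔ T := span_le.2 <| Set.image_subset_iff.2 fun k (hk : k < s + i) => by
    rcases lt_or_ge k s with h | h
    · exact mem_sup_left (subset_span (Set.mem_image_of_mem _ h))
    · obtain ⟨t, rfl⟩ := Nat.exists_eq_add_of_le h
      have hC : block B s t ∈ T := subset_span (Set.mem_image_of_mem _ (by simp; omega))
      simpa using add_mem (mem_sup_left (sub_block_mem B s t)) (mem_sup_right hC)
  have hgS : gsoVec B (s + i) ∈ Sᗮ := projGS_mem_orthogonal B (s + i) _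
  refine projGS_eq_of_mem _ (orthogonal_le hTS hgS) (mem_of_mem_sup_of_mem_orthogonal hTU ?_ ?_)
  · have hdiff : block B s i - gsoVec B (s + i) =
        (B (s + i) - gsoVec B (s + i)) - (B (s + i) - block B s i) := by abel
    rw [hdiff]
    exact hSUT (sub_mem (sub_projGS_mem B (s + i) _) (hUS (sub_block_mem B s i)))
  · exact sub_mem (block_mem_orthogonal B s i) (orthogonal_le hUS hgS)

lemma volB_succ_eq_norm_mul_volB_block (ℓ : ℕ) :
    volB B (ℓ + 1) = ‖B 0‖ * volB (block B 1) ℓ := by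
  have hg0 : gsoVec B 0 = B 0 := congrFun (block_zero B) 0
  simp [volB_eq_prod, Fin.prod_univ_succ, gsoVec_block, hg0, add_comm]

end Block

section Dual

variable (C : ℕ → Euc m) {ℓ : ℕ}

lemma dualFam_mem_span (i : ℕ) : dualFam C ℓ i ∈ span ℝ (C '' Set.Iio ℓ) := by
  unfold dualFam
  split_ifs
  · exact sum_mem fun k _ => smul_mem _ _ (subset_span (Set.mem_image_of_mem _ k.isLt))
  · exact zero_mem _

lemma inner_dualFam (hdet : (gram C ℓ).det ≠ 0) (j i : Fin ℓ) :
    ⟪C j, dualFam C ℓ i⟫_ℝ = if j = i then 1 else 0 := by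
  have hentry (k : Fin ℓ) :
      (gram C ℓ)⁻¹ k ⟨i, i.isLt⟩ * ⟪C j, C k⟫_ℝ = gram C ℓ j k * (gram C ℓ)⁻¹ k i :=
    mul_comm _ _
  simp only [dualFam, dif_pos i.isLt, inner_sum, real_inner_smul_right, hentry]
  rw [← Matrix.mul_apply, Matrix.mul_nonsing_inv _ (isUnit_iff_ne_zero.2 hdet), Matrix.one_apply]

lemma inner_dualFam_dualFam (hdet : (gram C ℓ).det ≠ 0) (a b : Fin ℓ) :
    ⟪dualFam C ℓ a, dualFam C ℓ b⟫_ℝ = (gram C ℓ)⁻¹ b a := by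
  conv_lhs => rw [dualFam, dif_pos a.isLt]
  simp [sum_inner, real_inner_smul_left, inner_dualFam C hdet]

lemma volB_revDual (hdet : (gram C ℓ).det ≠ 0) : volB (revDual C ℓ) ℓ = (volB C ℓ)⁻¹ := by
  have hgram : gram (revDual C ℓ) ℓ = ((gram C ℓ)⁻¹ᵀ).submatrix Fin.revPerm Fin.revPerm := by
    ext i j
    have hrev (k : Fin ℓ) : ℓ - 1 - (k : ℕ) = (Fin.rev k : ℕ) := by rw [Fin.val_rev]; omega
    change ⟪dualFam C ℓ (ℓ - 1 - i), dualFam C ℓ (ℓ - 1 - j)⟫_ℝ = _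
    rw [hrev i, hrev j, inner_dualFam_dualFam C hdet]
    rfl
  rw [volB, volB, hgram, Matrix.det_submatrix_equiv_self, Matrix.det_transpose,
    Matrix.det_nonsing_inv, Ring.inverse_eq_inv, Real.sqrt_inv]

lemma dualFam_last (hℓ : 1 ≤ ℓ) (hdet : (gram C ℓ).det ≠ 0) :
    dualFam C ℓ (ℓ - 1) = (‖gsoVec C (ℓ - 1)‖ ^ 2)⁻¹ • gsoVec C (ℓ - 1) := by
  have hg : ‖gsoVec C (ℓ - 1)‖ ≠ 0 :=
    norm_ne_zero_iff.2 (gsoVec_ne_zero_of_det_gram_ne_zero C hdet (by omega))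
  have hgS : gsoVec C (ℓ - 1) ∈ span ℝ (C '' Set.Iio ℓ) := by
    have hC : C (ℓ - 1) ∈ span ℝ (C '' Set.Iio ℓ) :=
      subset_span (Set.mem_image_of_mem _ (by simp; omega))
    have hle : span ℝ (C '' Set.Iio (ℓ - 1)) ≤ span ℝ (C '' Set.Iio ℓ) :=
      span_mono (Set.image_mono (Set.Iio_subset_Iio (Nat.sub_le ℓ 1)))
    simpa using sub_mem hC (hle (sub_gsoVec_mem C (ℓ - 1)))
  refine eq_of_mem_span_of_forall_inner_eq (dualFam_mem_span C _) (smul_mem _ _ hgS) ?_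
  rintro _ ⟨j, hj : j < ℓ, rfl⟩
  have hdual := inner_dualFam C hdet ⟨j, hj⟩ ⟨ℓ - 1, by omega⟩
  simp only [Fin.mk.injEq] at hdual
  rw [hdual, real_inner_smul_right, inner_gsoVec, gsoCoeff]
  split_ifs <;> first | omega | simp [hg]

lemma norm_revDual_zero (hℓ : 1 ≤ ℓ) (hdet : (gram C ℓ).det ≠ 0) :
    ‖revDual C ℓ 0‖ = ‖gsoVec C (ℓ - 1)‖⁻¹ := by
  rw [revDual, Nat.sub_zero, dualFam_last C hℓ hdet, norm_smul, norm_inv, norm_pow, norm_norm,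
    sq, mul_inv, mul_assoc, inv_mul_cancel₀, mul_one]
  exact norm_ne_zero_iff.2 (gsoVec_ne_zero_of_det_gram_ne_zero C hdet (by omega))

lemma DHSVPReduced.inv_norm_gsoVec_le {δ : ℝ} (h : DHSVPReduced δ C ℓ) (hℓ : 1 ≤ ℓ)
    (hV : 0 < volB C ℓ) : ‖gsoVec C (ℓ - 1)‖⁻¹ ≤ δ * (volB C ℓ)⁻¹ ^ ((1 : ℝ) / ℓ) := by
  have hdet : (gram C ℓ).det ≠ 0 := (Real.sqrt_pos.1 hV).ne'
  rwa [DHSVPReduced, HSVPReduced, norm_revDual_zero C hℓ hdet, volB_revDual C hdet] at h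

end Dual

open Real in
lemma volume_bounds_of_twin_inequalities {d δ x y V V₁ V₂ : ℝ} (hd : 1 < d) (hV₁ : 0 ≤ V₁)
    (hV₂ : 0 ≤ V₂) (hV : 0 < V) (hV₁y : V = V₁ * y) (hxV₂ : V = x * V₂)
    (h₁ : x ≤ δ * V₁ ^ (1 / d)) (h₂ : y⁻¹ ≤ δ * V₂⁻¹ ^ (1 / d)) :
    δ ^ (-d / (d - 1)) * x ≤ V ^ (1 / (d + 1)) ∧ V ^ (1 / (d + 1)) ≤ δ ^ (d / (d - 1)) * y := by
  have hx : 0 < x := pos_of_mul_pos_left (hxV₂ ▸ hV) hV₂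
  have hy : 0 < y := pos_of_mul_pos_right (hV₁y ▸ hV) hV₁
  replace hV₁ : 0 < V₁ := pos_of_mul_pos_left (hV₁y ▸ hV) hy.le
  replace hV₂ : 0 < V₂ := pos_of_mul_pos_right (hxV₂ ▸ hV) hx.le
  have hδ : 0 < δ := pos_of_mul_pos_left (hx.trans_le h₁) (by positivity)
  have hd₀ : 0 < d := by linarith
  have hd₁ : 0 < d - 1 := by linarith
  -- in logarithms all hypotheses and both claims are linear
  have l₁ := log_le_log hx h₁
  have l₂ := log_le_log (inv_pos.2 hy) h₂
  rw [log_mul hδ.ne' (by positivity), log_rpow hV₁] at l₁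
  rw [log_mul hδ.ne' (by positivity), log_rpow (inv_pos.2 hV₂), log_inv, log_inv] at l₂
  have lV₁ : log V = log V₁ + log y := by rw [hV₁y, log_mul hV₁.ne' hy.ne']
  have lV₂ : log V = log x + log V₂ := by rw [hxV₂, log_mul hx.ne' hV₂.ne']
  have c₁ : d * log x ≤ d * log δ + log V₁ := by
    have := mul_le_mul_of_nonneg_left l₁ hd₀.le
    field_simp at this
    linarith
  have c₂ : log V₂ ≤ d * log δ + d * log y := by
    have := mul_le_mul_of_nonneg_left l₂ hd₀.le
    field_simp at this
    linarith
  constructor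
  · rw [← log_le_log_iff (by positivity) (by positivity), log_mul (by positivity) hx.ne',
      log_rpow hδ, log_rpow hV]
    have : (d - 1) * (d + 1) * log x ≤ d * (d + 1) * log δ + (d - 1) * log V := by
      nlinarith [mul_le_mul_of_nonneg_left c₁ hd₀.le]
    field_simp
    linarith
  · rw [← log_le_log_iff (by positivity) (by positivity), log_mul (by positivity) hy.ne',
      log_rpow hδ, log_rpow hV]
    have : (d - 1) * log V ≤ d * (d + 1) * log δ + (d - 1) * (d + 1) * log y := by
      nlinarith [mul_le_mul_of_nonneg_left c₂ hd₀.le]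
    field_simp
    linarith

theorem twin_reduced_volume_general {m d : ℕ} (hd : 2 ≤ d) {δ : ℝ}
    (B : ℕ → Euc m) (hB : LinearIndependent ℝ (fun i : Fin (d + 1) => B i))
    (hTwin : TwinReduced δ B d) :
    δ ^ (-(d : ℝ) / ((d : ℝ) - 1)) * ‖B 0‖ ≤ volB B (d + 1) ^ ((1 : ℝ) / (d + 1)) ∧
      volB B (d + 1) ^ ((1 : ℝ) / (d + 1)) ≤ δ ^ ((d : ℝ) / ((d : ℝ) - 1)) * ‖gsoVec B d‖ := by
  obtain ⟨hHSVP, hDHSVP⟩ := hTwin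
  have hV : 0 < volB B (d + 1) := volB_pos_of_linearIndependent B hB
  have hsplit := volB_succ_eq_norm_mul_volB_block B d
  have h₁ : ‖B 0‖ ≤ δ * volB B d ^ ((1 : ℝ) / d) := by
    rwa [HSVPReduced, block_zero] at hHSVP
  have h₂ := hDHSVP.inv_norm_gsoVec_le _ (by omega)
    (pos_of_mul_pos_right (hsplit ▸ hV) (norm_nonneg _))
  rw [gsoVec_block, show 1 + (d - 1) = d by omega] at h₂
  exact volume_bounds_of_twin_inequalities (by exact_mod_cast hd) (Real.sqrt_nonneg _)
    (Real.sqrt_nonneg _) hV (volB_succ B d) hsplit h₁ h₂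

/-- if `B = (b_1, …, b_{d+1})` is a `δ`-twin-reduced basis with `d ≥ 2`
and `δ ≥ 1`, then `δ^{-d/(d-1)} ‖b_1‖ ≤ vol(L(B))^{1/(d+1)} ≤ δ^{d/(d-1)} ‖b*_{d+1}‖`. -/
theorem twin_reduced_volume {m d : ℕ} (hd : 2 ≤ d) {δ : ℝ} (hδ : 1 ≤ δ)
    (B : ℕ → Euc m) (hB : LinearIndependent ℝ (fun i : Fin (d + 1) => B i))
    (hTwin : TwinReduced δ B d) :
    δ ^ (-(d : ℝ) / ((d : ℝ) - 1)) * ‖B 0‖ ≤ volB B (d + 1) ^ ((1 : ℝ) / (d + 1)) ∧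
      volB B (d + 1) ^ ((1 : ℝ) / (d + 1)) ≤ δ ^ ((d : ℝ) / ((d : ℝ) - 1)) * ‖gsoVec B d‖ :=
  twin_reduced_volume_general hd B hB hTwin
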